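/- Let Θ and 𝒳 be standard Borel spaces, μ a probability measure on Θ, κ a Markov kernel from Θ to 𝒳, ρ the joint distribution of (x,θ) when θ ∼ μ and x ∼ κ(θ), M the marginal of ρ on 𝒳, and x ↦ Π(·|x) a disintegration (posterior kernel) of ρ given x. Let Υ : Θ → 𝒯 be measurable, let ν_𝒯 be a σ-finite measure on 𝒯, let Λ be a probability measure on 𝒯 with everywhere positive density λ with respect to ν_𝒯, and for each x let π(·|x) be a density of the marginal posterior Π_Υ(·|x) = Π(·|x) ∘ Υ⁻¹ with respect to ν_𝒯. Fix γ ∈ [0,1] and define B_{Λ,γ}(x) = {τ₀ : Π_Υ({τ : π(τ|x)/λ(τ) > π(τ₀|x)/λ(τ₀)} | x) ≤ γ}, assuming for each x that k_γ(x) = inf{k ≥ 0 : Π_Υ(π(·|x)/λ(·) > k | x) ≤ γ} > 0. Then for every measurable family of regions x ↦ B(x) ⊆ 𝒯 with Π_Υ(B(x)|x) ≥ Π_Υ(B_{Λ,γ}(x)|x) for all x, the prior probability of covering a false value satisfies ∫_Θ ∫_𝒯 κ(θ)({x : τ ∈ B(x)}) Λ(dτ) μ(dθ) ≥ ∫_Θ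 ∫_𝒯 κ(θ)({x : τ ∈ B_{Λ,γ}(x)}) Λ(dτ) μ(dθ). -/

import Mathlib

open MeasureTheory ProbabilityTheory
open scoped ENNReal

/-! Both sides integrate over `θ ∼ μ` the `(κ θ ⊗ Λ)`-measure of a subset of `𝒳 × 𝒯`, so by
Tonelli it suffices to compare, for each `x`, the `Λ`-contents of `B_{Λ,γ}(x)` and `B x`.
Since the levels `k` with `Π_Υ(π/λ > k | x) ≤ γ` are closed under infimum, `B_{Λ,γ}(x)` is the
superlevel set `{π(·|x)/λ ≥ k_γ(x)}`. On it the posterior dominates `k_γ(x) Λ`, off it the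
posterior is dominated by `k_γ(x) Λ`; exchanging mass between `B_{Λ,γ}(x)` and `B x`
(Neyman–Pearson) and cancelling `k_γ(x) > 0` gives the comparison. -/

namespace ENNReal

theorem le_mul_of_div_lt {a b c : ℝ≥0∞} (h : a / b < c) : a ≤ c * b := by
  rcases eq_or_ne c 0 with rfl | hc
  · simp at h
  by_contra! hlt
  have hb : b ≠ ∞ := by
    rintro rfl
    simp [ENNReal.mul_top hc] at hlt
  exact h.not_ge ((ENNReal.le_div_iff_mul_le (Or.inr hlt.ne_bot) (Or.inl hb)).2 hlt.le)

end ENNReal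

section Measure

variable {α : Type*} [MeasurableSpace α]

theorem measure_sdiff_le_measure_sdiff {μ : Measure α} [IsFiniteMeasure μ] {s t : Set α}
    (hs : MeasurableSet s) (ht : MeasurableSet t) (h : μ s ≤ μ t) : μ (s \ t) ≤ μ (t \ s) := by
  rw [← ENNReal.add_le_add_iff_left (measure_ne_top μ (s ∩ t)), measure_inter_add_sdiff _ ht,
    Set.inter_comm, measure_inter_add_sdiff _ hs]
  exact h

theorem measure_le_of_measure_sdiff_le {μ : Measure α} {s t : Set α}
    (hs : MeasurableSet s) (ht : MeasurableSet t) (h : μ (s \ t) ≤ μ (t \ s)) : μ s ≤ μ t := by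
  rw [← measure_inter_add_sdiff s ht, ← measure_inter_add_sdiff t hs, Set.inter_comm]
  gcongr

/-- The Neyman–Pearson lemma, in measure form. -/
theorem measure_le_of_measure_le_of_separating {P Λ : Measure α} [IsFiniteMeasure P]
    {k : ℝ≥0∞} (hk : k ≠ 0) {A B : Set α} (hA : MeasurableSet A) (hB : MeasurableSet B)
    (hin : ∀ s ⊆ A, MeasurableSet s → k * Λ s ≤ P s)
    (hout : ∀ s ⊆ Aᶜ, MeasurableSet s → P s ≤ k * Λ s) (hAB : P A ≤ P B) : Λ A ≤ Λ B := by
  refine measure_le_of_measure_sdiff_le hA hB ?_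
  have hchain : k * Λ (A \ B) ≤ k * Λ (B \ A) :=
    calc k * Λ (A \ B) ≤ P (A \ B) := hin _ Set.sdiff_subset (hA.diff hB)
      _ ≤ P (B \ A) := measure_sdiff_le_measure_sdiff hA hB hAB
      _ ≤ k * Λ (B \ A) := hout _ (fun _ hx => hx.2) (hB.diff hA)
  rcases eq_or_ne k ∞ with rfl | hk_top
  · have hfin : ∞ * Λ (A \ B) ≠ ∞ :=
      ((hin _ Set.sdiff_subset (hA.diff hB)).trans_lt (measure_lt_top P _)).ne
    have hnull : Λ (A \ B) = 0 := by
      by_contra h0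
      exact hfin (ENNReal.top_mul h0)
    simp [hnull]
  · exact (ENNReal.mul_le_mul_iff_right hk hk_top).mp hchain

theorem withDensity_setOf_le_div_le {ν : Measure α} {p l : α → ℝ≥0∞} (hp : Measurable p)
    (hl : Measurable l) [IsFiniteMeasure (ν.withDensity p)] {k : ℝ≥0∞} (hk : k ≠ 0)
    {B : Set α} (hB : MeasurableSet B)
    (hcontent : ν.withDensity p {τ | k ≤ p τ / l τ} ≤ ν.withDensity p B) :
    ν.withDensity l {τ | k ≤ p τ / l τ} ≤ ν.withDensity l B := by
  refine measure_le_of_measure_le_of_separating hk (measurableSet_le measurable_const (hp.div hl))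
    hB (fun s hsA hs => ?_) (fun s hsA hs => ?_) hcontent
  · rw [withDensity_apply _ hs, withDensity_apply _ hs, ← lintegral_const_mul k hl]
    exact setLIntegral_mono' hs fun τ hτ => ENNReal.mul_le_of_le_div (hsA hτ)
  · rw [withDensity_apply _ hs, withDensity_apply _ hs, ← lintegral_const_mul k hl]
    exact setLIntegral_mono' hs fun τ hτ => ENNReal.le_mul_of_div_lt (not_le.mp (hsA hτ))

/-- The admissible levels are closed under infimum: `{f > sInf S}` is the increasing union of
`{f > uₙ}` along levels `uₙ ∈ S` decreasing to `sInf S`. -/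
theorem measure_lt_le_iff_sInf_le (μ : Measure α) (f : α → ℝ≥0∞) (γ c : ℝ≥0∞) :
    μ {a | c < f a} ≤ γ ↔ sInf {k | μ {a | k < f a} ≤ γ} ≤ c := by
  set S := {k | μ {a | k < f a} ≤ γ}
  refine ⟨fun h => sInf_le h, fun h => (measure_mono fun a ha => h.trans_lt ha).trans ?_⟩
  show μ {a | sInf S < f a} ≤ γ
  have hS : S.Nonempty := ⟨⊤, by simp [S]⟩
  obtain ⟨u, hu_anti, hu_lim, hu_mem⟩ := exists_seq_tendsto_sInf hS (OrderBot.bddBelow S)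
  have hunion : {a | sInf S < f a} = ⋃ n, {a | u n < f a} := by
    ext a
    simp only [Set.mem_ofPred_eq, Set.mem_iUnion]
    exact ⟨fun ha => (hu_lim.eventually_lt_const ha).exists,
      fun ⟨n, hn⟩ => (sInf_le (hu_mem n)).trans_lt hn⟩
  have hmono : Monotone fun n => {a | u n < f a} := fun m n hmn a ha => (hu_anti hmn).trans_lt ha
  rw [hunion, hmono.measure_iUnion]
  exact iSup_le hu_mem

end Measure

section HpdLikeRegion

variable {α β : Type*} [MeasurableSpace β]

/-- `B_{Λ,γ}` for the posterior `Q` pushed forward by `Υ`, with `r = π / λ`. -/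
def hpdLikeRegion (Q : Measure β) (Υ : β → α) (r : α → ℝ≥0∞) (γ : ℝ≥0∞) : Set α :=
  {τ₀ | Q (Υ ⁻¹' {τ | r τ₀ < r τ}) ≤ γ}

theorem hpdLikeRegion_eq_setOf_sInf_le (Q : Measure β) (Υ : β → α) (r : α → ℝ≥0∞)
    (γ : ℝ≥0∞) :
    hpdLikeRegion Q Υ r γ = {τ | sInf {k | Q (Υ ⁻¹' {τ | k < r τ}) ≤ γ} ≤ r τ} :=
  Set.ext fun τ₀ => measure_lt_le_iff_sInf_le Q (r ∘ Υ) γ (r τ₀)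

variable [MeasurableSpace α]

theorem withDensity_hpdLikeRegion_le (Q : Measure β) [IsFiniteMeasure Q] {Υ : β → α}
    (hΥ : Measurable Υ) {ν : Measure α} {p l : α → ℝ≥0∞} (hp : Measurable p)
    (hl : Measurable l) (hdens : Q.map Υ = ν.withDensity p) {γ : ℝ≥0∞}
    (hthreshold : 0 < sInf {k | Q (Υ ⁻¹' {τ | k < p τ / l τ}) ≤ γ})
    {B : Set α} (hB : MeasurableSet B)
    (hcontent : Q (Υ ⁻¹' hpdLikeRegion Q Υ (fun τ => p τ / l τ) γ) ≤ Q (Υ ⁻¹' B)) :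
    ν.withDensity l (hpdLikeRegion Q Υ (fun τ => p τ / l τ) γ) ≤ ν.withDensity l B := by
  have : IsFiniteMeasure (ν.withDensity p) := hdens ▸ Q.isFiniteMeasure_map Υ
  have hratio : Measurable fun τ => p τ / l τ := hp.div hl
  rw [hpdLikeRegion_eq_setOf_sInf_le] at hcontent ⊢
  rw [← Measure.map_apply hΥ (measurableSet_le measurable_const hratio),
    ← Measure.map_apply hΥ hB, hdens] at hcontent
  exact withDensity_setOf_le_div_le hp hl hthreshold.ne' hB hcontent

theorem measurableSet_hpdLikeRegion {X : Type*} [MeasurableSpace X] (η : Kernel X β)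
    [IsSFiniteKernel η] {Υ : β → α} (hΥ : Measurable Υ) {r : X → α → ℝ≥0∞}
    (hr : Measurable (Function.uncurry r)) (γ : ℝ≥0∞) :
    MeasurableSet {p : X × α | p.2 ∈ hpdLikeRegion (η p.1) Υ (r p.1) γ} := by
  have hexceed : MeasurableSet {q : (X × α) × β | r q.1.1 q.1.2 < r q.1.1 (Υ q.2)} :=
    measurableSet_lt (hr.comp measurable_fst)
      (hr.comp (measurable_fst.fst.prodMk (hΥ.comp measurable_snd)))
  exact measurableSet_le
    (Kernel.measurable_kernel_prodMk_left (κ := η.comap Prod.fst measurable_fst) hexceed)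
    measurable_const

theorem lintegral_measure_preimage_le_of_forall_measure_preimage_le {m : Measure β}
    {Λ : Measure α} [SFinite m] [SFinite Λ] {C D : Set (β × α)} (hC : MeasurableSet C)
    (hD : MeasurableSet D) (h : ∀ x, Λ (Prod.mk x ⁻¹' C) ≤ Λ (Prod.mk x ⁻¹' D)) :
    ∫⁻ τ, m ((fun x => (x, τ)) ⁻¹' C) ∂Λ ≤ ∫⁻ τ, m ((fun x => (x, τ)) ⁻¹' D) ∂Λ := by
  rw [← Measure.prod_apply_symm hC, ← Measure.prod_apply_symm hD, Measure.prod_apply hC,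
    Measure.prod_apply hD]
  exact lintegral_mono h

end HpdLikeRegion

theorem hpd_like_region_minimizes_false_coverage_general
    {Θ 𝒳 𝒯 : Type*} [MeasurableSpace Θ] [MeasurableSpace 𝒳] [MeasurableSpace 𝒯]
    (μ : Measure Θ)
    (κ : Kernel Θ 𝒳) [IsMarkovKernel κ]
    (post : Kernel 𝒳 Θ) [IsMarkovKernel post]
    (Υ : Θ → 𝒯) (hΥ : Measurable Υ)
    (ν𝒯 : Measure 𝒯)
    (Λ : Measure 𝒯) [IsProbabilityMeasure Λ]
    (l : 𝒯 → ℝ≥0∞) (hl : Measurable l)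
    (hΛ : Λ = ν𝒯.withDensity l)
    (pd : 𝒳 → 𝒯 → ℝ≥0∞) (hpd : Measurable (fun p : 𝒳 × 𝒯 => pd p.1 p.2))
    (hdens : ∀ x, (post x).map Υ = ν𝒯.withDensity (pd x))
    (γ : ℝ≥0∞)
    (hk : ∀ x, 0 < sInf {k : ℝ≥0∞ | post x (Υ ⁻¹' {τ | pd x τ / l τ > k}) ≤ γ})
    (B : 𝒳 → Set 𝒯) (hB : MeasurableSet {p : 𝒳 × 𝒯 | p.2 ∈ B p.1})
    (hcontent : ∀ x,
      post x (Υ ⁻¹'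
        {τ₀ | post x (Υ ⁻¹' {τ | pd x τ / l τ > pd x τ₀ / l τ₀}) ≤ γ}) ≤
      post x (Υ ⁻¹' (B x))) :
    ∫⁻ θ, ∫⁻ τ,
        κ θ {x | τ ∈
          {τ₀ | post x (Υ ⁻¹' {τ' | pd x τ' / l τ' > pd x τ₀ / l τ₀}) ≤ γ}}
      ∂Λ ∂μ ≤
    ∫⁻ θ, ∫⁻ τ, κ θ {x | τ ∈ B x} ∂Λ ∂μ := by
  have hratio : Measurable (Function.uncurry fun x τ => pd x τ / l τ) :=
    hpd.div (hl.comp measurable_snd)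
  refine lintegral_mono fun θ => lintegral_measure_preimage_le_of_forall_measure_preimage_le
    (measurableSet_hpdLikeRegion post hΥ hratio γ) hB fun x => ?_
  rw [hΛ]
  exact withDensity_hpdLikeRegion_le (post x) hΥ (hpd.comp measurable_prodMk_left) hl (hdens x)
    (hk x) (measurable_prodMk_left hB) (hcontent x)

/-- Theorem 3: the hpd-like region `B_{Λ,γ}(x)` built from the ratio of the
marginal posterior density to the density `λ` of `Λ` minimizes the prior
probability of covering a false value `τ ∼ Λ`, among all families of regions
with at least as much posterior content. -/
theorem hpd_like_region_minimizes_false_coverage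
    {Θ 𝒳 𝒯 : Type*} [MeasurableSpace Θ] [StandardBorelSpace Θ]
    [MeasurableSpace 𝒳] [StandardBorelSpace 𝒳] [MeasurableSpace 𝒯]
    (μ : Measure Θ) [IsProbabilityMeasure μ]
    (κ : Kernel Θ 𝒳) [IsMarkovKernel κ]
    (ρ : Measure (𝒳 × Θ)) (hρ : ρ = (μ.compProd κ).map Prod.swap)
    (M : Measure 𝒳) (hM : M = ρ.fst)
    (post : Kernel 𝒳 Θ) [IsMarkovKernel post] (hpost : ρ = M.compProd post)
    (Υ : Θ → 𝒯) (hΥ : Measurable Υ)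
    (ν𝒯 : Measure 𝒯) [SigmaFinite ν𝒯]
    (Λ : Measure 𝒯) [IsProbabilityMeasure Λ]
    (l : 𝒯 → ℝ≥0∞) (hl : Measurable l) (hlpos : ∀ τ, 0 < l τ)
    (hΛ : Λ = ν𝒯.withDensity l)
    (pd : 𝒳 → 𝒯 → ℝ≥0∞) (hpd : Measurable (fun p : 𝒳 × 𝒯 => pd p.1 p.2))
    (hdens : ∀ x, (post x).map Υ = ν𝒯.withDensity (pd x))
    (γ : ℝ≥0∞) (hγ : γ ≤ 1)
    (hk : ∀ x, 0 < sInf {k : ℝ≥0∞ | post x (Υ ⁻¹' {τ | pd x τ / l τ > k}) ≤ γ})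
    (B : 𝒳 → Set 𝒯) (hB : MeasurableSet {p : 𝒳 × 𝒯 | p.2 ∈ B p.1})
    (hcontent : ∀ x,
      post x (Υ ⁻¹'
        {τ₀ | post x (Υ ⁻¹' {τ | pd x τ / l τ > pd x τ₀ / l τ₀}) ≤ γ}) ≤
      post x (Υ ⁻¹' (B x))) :
    ∫⁻ θ, ∫⁻ τ,
        κ θ {x | τ ∈
          {τ₀ | post x (Υ ⁻¹' {τ' | pd x τ' / l τ' > pd x τ₀ / l τ₀}) ≤ γ}}
      ∂Λ ∂μ ≤
    ∫⁻ θ, ∫⁻ τ, κ θ {x | τ ∈ B x} ∂Λ ∂μ :=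
  hpd_like_region_minimizes_false_coverage_general μ κ post Υ hΥ ν𝒯 Λ l hl hΛ pd hpd hdens γ hk B hB
    hcontent
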